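/- arXiv:2011.03622 — 5 statements merged into one kernel-verified Lean document; each statement's English description precedes it below -/
import Mathlib

section
/- Let f, g be polynomials in X_1,...,X_d of degree at most k. Then the squared L^2 norm of the coefficient vector of the product satisfies \|v(fg)\|^2 ≤ C_k \|v(f)\|^2 \|v(g)\|^2, where C_k depends only on k (one may take C_k to be the maximum number of ways a monomial of degree at most 2k can be written as a product of two monomials of degree at most k). -/
open Finset

/-- The squared `L²` norm of the coefficient vector of a multivariate polynomial. -/
noncomputable def coeffNormSq {d : ℕ} (f : MvPolynomial (Fin d) ℝ) : ℝ :=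
  ∑ m ∈ f.support, f.coeff m ^ 2

lemma card_antidiag_le {d : ℕ} (m : Fin d →₀ ℕ) :
    #(Finset.HasAntidiagonal.antidiagonal m) ≤ 2 ^ (m.sum fun _ e => e) := by
  have h1 : #(Finset.HasAntidiagonal.antidiagonal m) ≤ #(Finset.Iic m) := by
    apply Finset.card_le_card_of_injOn Prod.fst
    · intro p hp
      rw [Finset.mem_coe, Finset.HasAntidiagonal.mem_antidiagonal] at hp
      exact Finset.mem_Iic.2 (hp ▸ le_self_add)
    · intro p hp q hq h
      simp only [Finset.coe_sort_coe, Finset.mem_coe, Finset.HasAntidiagonal.mem_antidiagonal] at hp hq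
      ext1
      · exact h
      · have : p.1 + p.2 = q.1 + q.2 := hp.trans hq.symm
        rw [h] at this
        exact add_left_cancel this
  refine h1.trans ?_
  rw [Finsupp.card_Iic]
  calc ∏ i ∈ m.support, #(Finset.Iic (m i)) ≤ ∏ i ∈ m.support, 2 ^ (m i) := by
        apply Finset.prod_le_prod'
        intro i _
        rw [Nat.card_Iic]
        exact Nat.succ_le_of_lt (Nat.lt_two_pow_self)
    _ = 2 ^ (m.sum fun _ e => e) := by
        rw [Finset.prod_pow_eq_pow_sum]; rfl

/-- For polynomials `f, g` in `d` variables of degree at most `k`,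
`‖v(fg)‖² ≤ C_k ‖v(f)‖² ‖v(g)‖²` where `C_k > 0` depends only on `k`, not on `d`. -/
theorem stmt8 (k : ℕ) :
    ∃ C : ℝ, 0 < C ∧
      ∀ (d : ℕ) (f g : MvPolynomial (Fin d) ℝ),
        f.totalDegree ≤ k → g.totalDegree ≤ k →
        coeffNormSq (f * g) ≤ C * coeffNormSq f * coeffNormSq g := by
  refine ⟨(2 : ℝ) ^ (2 * k), by positivity, fun d f g hf hg => ?_⟩
  classical
  set S : (Fin d →₀ ℕ) → Finset ((Fin d →₀ ℕ) × (Fin d →₀ ℕ)) :=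
    fun m => (Finset.HasAntidiagonal.antidiagonal m).filter fun p => p.1 ∈ f.support ∧ p.2 ∈ g.support with hS
  have key : ∀ m ∈ (f * g).support,
      (f * g).coeff m ^ 2 ≤ (2 : ℝ) ^ (2 * k) * ∑ p ∈ S m, (f.coeff p.1 * g.coeff p.2) ^ 2 := by
    intro m hm
    have hcoeff : (f * g).coeff m = ∑ p ∈ S m, f.coeff p.1 * g.coeff p.2 := by
      rw [MvPolynomial.coeff_mul, hS]
      rw [Finset.sum_filter_of_ne]
      intro p _ hne
      constructor
      · simp only [MvPolynomial.mem_support_iff]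
        intro h; rw [h, zero_mul] at hne; exact hne rfl
      · simp only [MvPolynomial.mem_support_iff]
        intro h; rw [h, mul_zero] at hne; exact hne rfl
    have hcard : (#(S m) : ℝ) ≤ (2 : ℝ) ^ (2 * k) := by
      have h1 : #(S m) ≤ #(Finset.HasAntidiagonal.antidiagonal m) := Finset.card_filter_le _ _
      have h2 := card_antidiag_le m
      have hdeg : (m.sum fun _ e => e) ≤ 2 * k := by
        have := MvPolynomial.le_totalDegree hm
        have := (MvPolynomial.totalDegree_mul f g).trans (add_le_add hf hg)
        omega
      have : #(S m) ≤ 2 ^ (2 * k) :=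
        (h1.trans h2).trans (Nat.pow_le_pow_right (by norm_num) hdeg)
      calc (#(S m) : ℝ) ≤ ((2 ^ (2 * k) : ℕ) : ℝ) := by exact_mod_cast this
        _ = (2 : ℝ) ^ (2 * k) := by push_cast; ring
    calc (f * g).coeff m ^ 2 = (∑ p ∈ S m, f.coeff p.1 * g.coeff p.2) ^ 2 := by rw [hcoeff]
      _ ≤ #(S m) * ∑ p ∈ S m, (f.coeff p.1 * g.coeff p.2) ^ 2 := sq_sum_le_card_mul_sum_sq
      _ ≤ (2 : ℝ) ^ (2 * k) * ∑ p ∈ S m, (f.coeff p.1 * g.coeff p.2) ^ 2 := by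
          apply mul_le_mul_of_nonneg_right hcard
          positivity
  have hdisj : ∀ m₁ ∈ (f * g).support, ∀ m₂ ∈ (f * g).support, m₁ ≠ m₂ →
      Disjoint (S m₁) (S m₂) := by
    intro m₁ _ m₂ _ hne
    refine Finset.disjoint_left.2 fun p hp1 hp2 => ?_
    simp only [hS, Finset.mem_filter, Finset.HasAntidiagonal.mem_antidiagonal] at hp1 hp2
    exact hne (hp1.1.symm.trans hp2.1)
  calc coeffNormSq (f * g) = ∑ m ∈ (f * g).support, (f * g).coeff m ^ 2 := rfl
    _ ≤ ∑ m ∈ (f * g).support,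
        (2 : ℝ) ^ (2 * k) * ∑ p ∈ S m, (f.coeff p.1 * g.coeff p.2) ^ 2 :=
        Finset.sum_le_sum key
    _ = (2 : ℝ) ^ (2 * k) * ∑ m ∈ (f * g).support, ∑ p ∈ S m,
        (f.coeff p.1 * g.coeff p.2) ^ 2 := by rw [Finset.mul_sum]
    _ = (2 : ℝ) ^ (2 * k) * ∑ p ∈ (f * g).support.biUnion S,
        (f.coeff p.1 * g.coeff p.2) ^ 2 := by rw [Finset.sum_biUnion hdisj]
    _ ≤ (2 : ℝ) ^ (2 * k) * ∑ p ∈ f.support ×ˢ g.support,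
        (f.coeff p.1 * g.coeff p.2) ^ 2 := by
        apply mul_le_mul_of_nonneg_left _ (by positivity)
        apply Finset.sum_le_sum_of_subset_of_nonneg
        · intro p hp
          simp only [Finset.mem_biUnion] at hp
          obtain ⟨m, _, hp⟩ := hp
          simp only [hS, Finset.mem_filter] at hp
          exact Finset.mem_product.2 hp.2
        · intros; positivity
    _ = (2 : ℝ) ^ (2 * k) * (coeffNormSq f * coeffNormSq g) := by
        rw [Finset.sum_product]
        unfold coeffNormSq
        rw [Finset.sum_mul_sum]
        congr 1
        apply Finset.sum_congr rfl
        intro a _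
        apply Finset.sum_congr rfl
        intro b _
        ring
    _ = (2 : ℝ) ^ (2 * k) * coeffNormSq f * coeffNormSq g := by ring
end

section
/- Let F(y) = \sum_{i=1}^k w_i e^{a_i y + (1/2) b_i y^2} be a formal power series in y, where w_i, a_i, b_i are elements of a commutative Q-algebra. Define the operators D_i = \partial_y - (a_i + y b_i). Then D_k^{2^{k-1}} D_{k-1}^{2^{k-2}} \cdots D_1^{2^0} (F) = 0. -/
/-!
Write `e_i = e^{a_i y + b_i y²/2}`. Since `e_i' = (a_i + b_i y) e_i`, for a polynomial `p`
we get `D_j (p e_i) = (p' + ((a_i - a_j) + (b_i - b_j) y) p) e_i`: the operator `D_j` raises the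
degree of each polynomial coefficient by at most one, and acts on the `j`-th one as plain
differentiation. Hence, by induction on `n`, after the first `n` factors the series has the form
`∑_{i ≥ n} p_i e_i` with `deg p_i < 2^n`, and the next factor `D_n^{2^n}` kills the `n`-th term.
-/

open PowerSeries

variable {R : Type*} [CommRing R] [Algebra ℚ R]

/-- Coefficients of the formal power series `e^{a y + (1/2) b y²}` in `y`. -/
noncomputable def expCoeff (a b : R) : ℕ → R
  | 0 => 1
  | 1 => a
  | (n + 2) => algebraMap ℚ R (((n : ℚ) + 2)⁻¹) *
      (a * expCoeff a b (n + 1) + b * expCoeff a b n)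

/-- The formal power series `e^{a y + (1/2) b y²}` in `y`. -/
noncomputable def expAB (a b : R) : PowerSeries R := PowerSeries.mk (expCoeff a b)

/-- The differential operator `D = ∂_y - (a + y b)` on formal power series in `y`. -/
noncomputable def Dop (a b : R) (f : PowerSeries R) : PowerSeries R :=
  f.derivativeFun - (PowerSeries.C a + PowerSeries.X * PowerSeries.C b) * f

/-- `iterOps D n = (D_{n-1})^{2^{n-1}} ∘ ⋯ ∘ (D_1)^{2^1} ∘ (D_0)^{2^0}`
(0-indexed; this is `D_k^{2^{k-1}} ⋯ D_1^{2^0}` in 1-indexed notation). -/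
noncomputable def iterOps {M : Type*} (D : ℕ → M → M) : ℕ → M → M
  | 0 => id
  | (n + 1) => (D n)^[2 ^ n] ∘ iterOps D n

open scoped Polynomial

section

variable {S : Type*} [Semiring S]

/-- Conjugating `∂ - s` by a series `E` with `E' = (s + r) E` turns it into this operator on
polynomial factors. -/
noncomputable def twistedDeriv (r q : S[X]) : S[X] :=
  Polynomial.derivative q + r * q

lemma twistedDeriv_zero : twistedDeriv (0 : S[X]) = Polynomial.derivative := by
  funext q
  simp [twistedDeriv]

lemma natDegree_twistedDeriv_le {r : S[X]} (hr : r.natDegree ≤ 1) (q : S[X]) :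
    (twistedDeriv r q).natDegree ≤ q.natDegree + 1 := by
  refine (Polynomial.natDegree_add_le _ _).trans (max_le ?_ ?_)
  · exact (Polynomial.natDegree_derivative_le q).trans (by omega)
  · exact Polynomial.natDegree_mul_le.trans (by omega)

lemma natDegree_iterate_twistedDeriv_le {r : S[X]} (hr : r.natDegree ≤ 1) (q : S[X]) (n : ℕ) :
    ((twistedDeriv r)^[n] q).natDegree ≤ q.natDegree + n := by
  induction n with
  | zero => simp
  | succ n ih =>
    rw [Function.iterate_succ_apply']
    exact (natDegree_twistedDeriv_le hr _).trans (by omega)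

noncomputable def affinePoly (c d : S) : S[X] :=
  Polynomial.C c + Polynomial.X * Polynomial.C d

lemma affinePoly_zero : affinePoly (0 : S) 0 = 0 := by
  simp [affinePoly]

lemma natDegree_affinePoly_le (c d : S) : (affinePoly c d).natDegree ≤ 1 := by
  refine (Polynomial.natDegree_add_le _ _).trans (max_le ?_ ?_)
  · simp
  · exact Polynomial.natDegree_mul_le.trans (by simpa using Polynomial.natDegree_X_le)

end

section

variable {S : Type*} [CommRing S]

lemma Dop_eq_linearMap (a b : S) :
    Dop a b =
      ⇑((derivative S).toLinearMap - LinearMap.mulLeft S (C a + X * C b) : Module.End S S⟦X⟧) := by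
  funext f
  rfl

lemma Dop_iterate_sum (a b : S) (m : ℕ) {ι : Type*} (s : Finset ι) (f : ι → S⟦X⟧) :
    (Dop a b)^[m] (∑ i ∈ s, f i) = ∑ i ∈ s, (Dop a b)^[m] (f i) := by
  rw [Dop_eq_linearMap, ← Module.End.coe_pow, map_sum]

end

lemma derivative_expAB (a b : R) : derivative R (expAB a b) = (C a + X * C b) * expAB a b := by
  ext (_ | n)
  · simp [coeff_derivative, expAB, expCoeff]
  · have hinv : algebraMap ℚ R ((n : ℚ) + 2)⁻¹ * algebraMap ℚ R ((n : ℚ) + 2) = 1 := by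
      rw [← map_mul, inv_mul_cancel₀ (by positivity), map_one]
    have hcast : ((n + 1 : ℕ) : R) + 1 = algebraMap ℚ R ((n : ℚ) + 2) := by
      rw [map_add, map_natCast, map_ofNat]
      push_cast
      ring
    simp only [coeff_derivative, add_mul, map_add, coeff_C_mul, mul_assoc, coeff_succ_X_mul,
      expAB, coeff_mk, expCoeff]
    rw [hcast]
    linear_combination (a * expCoeff a b (n + 1) + b * expCoeff a b n) * hinv

lemma Dop_coe_mul_expAB (a b a' b' : R) (p : R[X]) :
    Dop a' b' (p * expAB a b) =
      (twistedDeriv (affinePoly (a - a') (b - b')) p : R⟦X⟧) *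
        expAB a b := by
  show derivative R _ - _ = _
  rw [Derivation.leibniz, derivative_coe, derivative_expAB]
  simp only [twistedDeriv, affinePoly, map_sub, Polynomial.coe_add, Polynomial.coe_sub,
    Polynomial.coe_mul, Polynomial.coe_C, Polynomial.coe_X, smul_eq_mul]
  ring

lemma Dop_iterate_coe_mul_expAB (a b a' b' : R) (p : R[X]) (n : ℕ) :
    (Dop a' b')^[n] (p * expAB a b) =
      ((twistedDeriv (affinePoly (a - a') (b - b')))^[n] p : R⟦X⟧) *
        expAB a b := by
  induction n generalizing p with
  | zero => rfl
  | succ n ih =>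
    rw [Function.iterate_succ_apply, Dop_coe_mul_expAB, ih, Function.iterate_succ_apply]

lemma Dop_iterate_sum_coe_mul_expAB {ι : Type*} [DecidableEq ι] (a b : ι → R) (s : Finset ι)
    (p : ι → R[X]) (j : ι) {N : ℕ} (hj : (p j).natDegree < N) :
    (Dop (a j) (b j))^[N] (∑ i ∈ s, (p i : R⟦X⟧) * expAB (a i) (b i)) =
      ∑ i ∈ s.erase j,
        ((twistedDeriv (affinePoly (a i - a j) (b i - b j)))^[N] (p i) : R⟦X⟧) *
          expAB (a i) (b i) := by
  have hj_vanishes : (twistedDeriv (affinePoly (a j - a j) (b j - b j)))^[N] (p j) = 0 := by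
    rw [sub_self, sub_self, affinePoly_zero, twistedDeriv_zero]
    exact Polynomial.iterate_derivative_eq_zero hj
  rw [Dop_iterate_sum]
  simp only [Dop_iterate_coe_mul_expAB]
  exact (Finset.sum_erase _ (by rw [hj_vanishes, Polynomial.coe_zero, zero_mul])).symm

lemma exists_iterOps_sum_expAB_eq (k : ℕ) (w a b : ℕ → R) (n : ℕ) :
    ∃ p : ℕ → R[X], (∀ i, (p i).natDegree < 2 ^ n) ∧
      iterOps (fun i => Dop (a i) (b i)) n
          (∑ i ∈ Finset.range k, C (w i) * expAB (a i) (b i)) =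
        ∑ i ∈ Finset.Ico n k, (p i : R⟦X⟧) * expAB (a i) (b i) := by
  induction n with
  | zero => exact ⟨fun i => Polynomial.C (w i), fun i => by simp, by simp [iterOps]⟩
  | succ n ih =>
    obtain ⟨p, hp_deg, hp⟩ := ih
    refine ⟨fun i => (twistedDeriv (affinePoly (a i - a n) (b i - b n)))^[2 ^ n] (p i),
      fun i => ?_, ?_⟩
    · calc _ ≤ (p i).natDegree + 2 ^ n :=
            natDegree_iterate_twistedDeriv_le (natDegree_affinePoly_le _ _) _ _
        _ < 2 ^ (n + 1) := by have := hp_deg i; omega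
    · rw [iterOps, Function.comp_apply, hp, Dop_iterate_sum_coe_mul_expAB a b _ p n (hp_deg n),
        ← Nat.Ico_succ_left_eq_erase_Ico]

/-- For `F(y) = ∑_{i=1}^k w_i e^{a_i y + (1/2) b_i y²}` over a commutative `ℚ`-algebra and
`D_i = ∂_y - (a_i + y b_i)`, we have `D_k^{2^{k-1}} D_{k-1}^{2^{k-2}} ⋯ D_1^{2^0} (F) = 0`. -/
theorem stmt12 (k : ℕ) (w a b : ℕ → R) :
    iterOps (fun i => Dop (a i) (b i)) k
      (∑ i ∈ Finset.range k, PowerSeries.C (w i) * expAB (a i) (b i)) = 0 := by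
  obtain ⟨p, -, h⟩ := exists_iterOps_sum_expAB_eq k w a b k
  rw [h, Finset.Ico_self, Finset.sum_empty]
end

section
/- Let A and B be nondegenerate one-dimensional Gaussians N(μ_1, σ_1^2), N(μ_2, σ_2^2) with d_TV(A,B) ≤ 1 - λ for a constant λ > 0. Then for every sufficiently small ε > 0 and for D ∈ {A, B}: P_{x~D}[ε ≤ A(x)/B(x) ≤ 1/ε] ≥ 1 - ε^{c(λ)} for some c(λ) > 0 depending only on λ. -/
open MeasureTheory ProbabilityTheory

noncomputable def tvDist {α : Type*} [MeasurableSpace α] (μ ν : Measure α) : ℝ :=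
  ⨆ s : {s : Set α // MeasurableSet s}, |(μ s).toReal - (ν s).toReal|

/-!
If `d_TV(A, B) ≤ 1 - λ`, then `B` gives mass at least `3λ/4` to the ball of radius `R(λ) σ₁` around
`μ₁`, which carries all but `λ/4` of the mass of `A`. As the density of `B` is at most `1 / σ₂`,
this forces `σ₂ ≲ σ₁`; as `B` is concentrated near `μ₂`, it forces `|μ₁ - μ₂| ≲ σ₁ + σ₂`. Once
`σ₁, σ₂` and `|μ₁ - μ₂|` are comparable up to a constant `L = L(λ)`, the log-likelihood ratio
`log A - log B` is `O(L⁴ r²)` on the ball of radius `r σ₁` around `μ₁`. Taking `r² ≍ log (1/ε)`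
makes it at most `log (1/ε)` there, while the Gaussian tail outside that ball is
`2 exp (-r² / 2)`, a power of `ε`. Swapping `A` and `B` handles `D = B`.
-/

open Real Set Metric

section TotalVariation

variable {α : Type*} [MeasurableSpace α]

lemma tvDist_comm (μ ν : Measure α) : tvDist μ ν = tvDist ν μ := by
  simp only [tvDist, abs_sub_comm]

lemma abs_sub_le_tvDist (μ ν : Measure α) [IsProbabilityMeasure μ] [IsProbabilityMeasure ν]
    {s : Set α} (hs : MeasurableSet s) : |μ.real s - ν.real s| ≤ tvDist μ ν := by
  refine le_ciSup (f := fun s : {s : Set α // MeasurableSet s} ↦ |μ.real s - ν.real s|)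
    ⟨1, ?_⟩ ⟨s, hs⟩
  rintro _ ⟨t, rfl⟩
  exact abs_sub_le_of_nonneg_of_le measureReal_nonneg measureReal_le_one measureReal_nonneg
    measureReal_le_one

lemma measureReal_le_measureReal_add_tvDist (μ ν : Measure α) [IsProbabilityMeasure μ]
    [IsProbabilityMeasure ν] {s : Set α} (hs : MeasurableSet s) :
    μ.real s ≤ ν.real s + tvDist μ ν := by
  linarith [le_abs_self (μ.real s - ν.real s), abs_sub_le_tvDist μ ν hs]

end TotalVariation

section Gaussian

variable (μ : ℝ)

lemma hasSubgaussianMGF_sub_mean_gaussianReal (v : NNReal) :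
    HasSubgaussianMGF (fun x ↦ x - μ) v (gaussianReal μ v) := by
  rw [← HasSubgaussianMGF.id_map_iff (by fun_prop), gaussianReal_map_sub_const, sub_self]
  refine ⟨integrable_exp_mul_gaussianReal, fun t ↦ ?_⟩
  simp [mgf_id_gaussianReal]

lemma gaussianReal_real_compl_ball_le (v : NNReal) {a : ℝ} (ha : 0 ≤ a) :
    (gaussianReal μ v).real (ball μ a)ᶜ ≤ 2 * exp (-a ^ 2 / (2 * v)) := by
  have h := hasSubgaussianMGF_sub_mean_gaussianReal μ v
  have hsub : (ball μ a)ᶜ ⊆ {x | a ≤ x - μ} ∪ {x | a ≤ -(x - μ)} := by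
    intro x hx
    simp only [mem_compl_iff, mem_ball, not_lt, Real.dist_eq] at hx
    exact le_abs'.1 hx |>.symm.imp (fun h ↦ h) (fun h ↦ by simp only [mem_ofPred_eq]; linarith)
  calc (gaussianReal μ v).real (ball μ a)ᶜ
      ≤ (gaussianReal μ v).real ({x | a ≤ x - μ} ∪ {x | a ≤ -(x - μ)}) := measureReal_mono hsub
    _ ≤ _ := measureReal_union_le _ _
    _ ≤ exp (-a ^ 2 / (2 * v)) + exp (-a ^ 2 / (2 * v)) :=
      add_le_add (h.measure_ge_le ha) (h.neg.measure_ge_le ha)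
    _ = 2 * exp (-a ^ 2 / (2 * v)) := by ring

lemma gaussianPDFReal_le (v : NNReal) (x : ℝ) : gaussianPDFReal μ v x ≤ (√(2 * π * v))⁻¹ := by
  rw [gaussianPDFReal]
  refine mul_le_of_le_one_right (by positivity) (exp_le_one_iff.2 ?_)
  exact div_nonpos_of_nonpos_of_nonneg (by nlinarith [sq_nonneg (x - μ)]) (by positivity)

lemma gaussianReal_real_le_volume_real_mul {v : NNReal} (hv : v ≠ 0) {s : Set ℝ} (hs : MeasurableSet s)
    (hs' : volume s ≠ ⊤) : (gaussianReal μ v).real s ≤ volume.real s * (√(2 * π * v))⁻¹ := by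
  rw [measureReal_def, gaussianReal_apply_eq_integral μ hv,
    ENNReal.toReal_ofReal (setIntegral_nonneg hs fun x _ ↦ gaussianPDFReal_nonneg μ v x)]
  calc ∫ x in s, gaussianPDFReal μ v x ≤ ∫ _ in s, (√(2 * π * v))⁻¹ :=
        setIntegral_mono_on (integrable_gaussianPDFReal μ v).integrableOn
          (integrableOn_const hs') hs fun x _ ↦ gaussianPDFReal_le μ v x
    _ = volume.real s * (√(2 * π * v))⁻¹ := setIntegral_const _

lemma log_gaussianPDFReal {v : NNReal} (hv : v ≠ 0) (x : ℝ) :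
    log (gaussianPDFReal μ v x) = -log √(2 * π * v) - (x - μ) ^ 2 / (2 * v) := by
  rw [gaussianPDFReal, log_mul (by positivity) (exp_pos _).ne', log_inv, log_exp]
  ring

end Gaussian

lemma abs_log_sub_log_le {a b L : ℝ} (ha : 0 < a) (hb : 0 < b) (hab : a ≤ L * b)
    (hba : b ≤ L * a) : |log a - log b| ≤ log L := by
  have hL : 0 < L := pos_of_mul_pos_left (ha.trans_le hab) hb.le
  have h1 := log_le_log ha hab
  have h2 := log_le_log hb hba
  rw [log_mul hL.ne' hb.ne'] at h1
  rw [log_mul hL.ne' ha.ne'] at h2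
  exact abs_sub_le_iff.2 ⟨by linarith, by linarith⟩

lemma sq_div_two_mul_le_of_abs_le {y k : ℝ} {v : NNReal} (hv : v ≠ 0) (h : |y| ≤ k * √v) :
    y ^ 2 / (2 * v) ≤ k ^ 2 / 2 := by
  have hv' : (0 : ℝ) < v := by positivity
  have hy : y ^ 2 ≤ k ^ 2 * v := by
    calc y ^ 2 = |y| ^ 2 := (sq_abs y).symm
      _ ≤ (k * √v) ^ 2 := pow_le_pow_left₀ (abs_nonneg y) h 2
      _ = k ^ 2 * v := by rw [mul_pow, sq_sqrt hv'.le]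
  rw [div_le_div_iff₀ (by positivity) two_pos]
  nlinarith

lemma neg_sq_mul_sqrt_div_two_mul (R : ℝ) {v : NNReal} (hv : v ≠ 0) :
    -(R * √v) ^ 2 / (2 * v) = -R ^ 2 / 2 := by
  have hv' : (0 : ℝ) < v := by positivity
  rw [mul_pow, sq_sqrt hv'.le]
  field_simp

section Comparability

variable {lam R μ₁ μ₂ : ℝ} {v₁ v₂ : NNReal} (hR : 0 < R) (hRlam : 2 * exp (-R ^ 2 / 2) ≤ lam / 4)
  (h₁ : v₁ ≠ 0) (h₂ : v₂ ≠ 0)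
  (hTV : tvDist (gaussianReal μ₁ v₁) (gaussianReal μ₂ v₂) ≤ 1 - lam)
include hR hRlam h₁ hTV

lemma le_gaussianReal_real_ball_of_tvDist_le :
    3 * lam / 4 ≤ (gaussianReal μ₂ v₂).real (ball μ₁ (R * √v₁)) := by
  have htail := gaussianReal_real_compl_ball_le μ₁ v₁ (a := R * √v₁) (by positivity)
  rw [probReal_compl_eq_one_sub measurableSet_ball, neg_sq_mul_sqrt_div_two_mul R h₁] at htail
  linarith [measureReal_le_measureReal_add_tvDist (gaussianReal μ₁ v₁) (gaussianReal μ₂ v₂)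
    (measurableSet_ball (x := μ₁) (ε := R * √v₁))]

include h₂

lemma mul_sqrt_le_of_tvDist_le : lam * √v₂ ≤ 3 * R * √v₁ := by
  have hlam : 0 < lam := by linarith [exp_pos (-R ^ 2 / 2)]
  have hball := (le_gaussianReal_real_ball_of_tvDist_le hR hRlam h₁ hTV).trans
    (gaussianReal_real_le_volume_real_mul μ₂ h₂ measurableSet_ball measure_ball_lt_top.ne)
  have hnorm : √(v₂ : ℝ) ≤ √(2 * π * v₂) :=
    sqrt_le_sqrt (le_mul_of_one_le_left (by positivity) (by nlinarith [pi_gt_three]))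
  rw [volume_real_ball (by positivity), ← div_eq_mul_inv,
    le_div_iff₀ (by positivity)] at hball
  nlinarith [sqrt_nonneg (v₁ : ℝ)]

lemma abs_sub_le_of_tvDist_le : |μ₁ - μ₂| ≤ R * (√v₁ + √v₂) := by
  by_contra! hfar
  have hsub : ball μ₁ (R * √v₁) ⊆ (ball μ₂ (R * √v₂))ᶜ := by
    intro x hx hx'
    rw [mem_ball, Real.dist_eq] at hx hx'
    linarith [abs_sub_le μ₁ x μ₂, abs_sub_comm μ₁ x]
  have htail := (measureReal_mono hsub).trans
    (gaussianReal_real_compl_ball_le μ₂ v₂ (a := R * √v₂) (by positivity))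
  rw [neg_sq_mul_sqrt_div_two_mul R h₂] at htail
  linarith [le_gaussianReal_real_ball_of_tvDist_le hR hRlam h₁ hTV, exp_pos (-R ^ 2 / 2)]

end Comparability

open Filter Topology in
lemma exists_sqrt_le_and_abs_sub_le_of_tvDist_le {lam : ℝ} (hlam : 0 < lam) :
    ∃ L, 1 ≤ L ∧ ∀ (μ₁ μ₂ : ℝ) (v₁ v₂ : NNReal), v₁ ≠ 0 → v₂ ≠ 0 →
      tvDist (gaussianReal μ₁ v₁) (gaussianReal μ₂ v₂) ≤ 1 - lam →
      √v₂ ≤ L * √v₁ ∧ |μ₁ - μ₂| ≤ L * √v₁ := by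
  obtain ⟨R, hRlam, hR⟩ : ∃ R, 2 * exp (-R ^ 2 / 2) ≤ lam / 4 ∧ 0 < R := by
    have hlim : Tendsto (fun R : ℝ ↦ 2 * exp (-R ^ 2 / 2)) atTop (𝓝 0) := by
      simpa [neg_div] using (tendsto_exp_neg_atTop_nhds_zero.comp
        ((tendsto_pow_atTop two_ne_zero).atTop_div_const two_pos)).const_mul 2
    exact ((hlim.eventually (ge_mem_nhds (by positivity))).and (eventually_gt_atTop 0)).exists
  set Q := 3 * R / lam
  refine ⟨(1 + R) * (1 + Q), by nlinarith [div_nonneg (by positivity : 0 ≤ 3 * R) hlam.le],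
    fun μ₁ μ₂ v₁ v₂ h₁ h₂ hTV ↦ ?_⟩
  have hQ : 0 ≤ Q := by positivity
  have hs₁ := sqrt_nonneg (v₁ : ℝ)
  have hs₂ : √(v₂ : ℝ) ≤ Q * √v₁ := by
    rw [div_mul_eq_mul_div, le_div_iff₀ hlam]
    linarith [mul_sqrt_le_of_tvDist_le hR hRlam h₁ h₂ hTV]
  have hμ := abs_sub_le_of_tvDist_le hR hRlam h₁ h₂ hTV
  have hRQ := mul_le_mul_of_nonneg_left hs₂ hR.le
  constructor
  · nlinarith [mul_nonneg (by positivity : 0 ≤ 1 + R + R * Q) hs₁]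
  · nlinarith [mul_nonneg (by positivity : 0 ≤ 1 + Q) hs₁]

lemma abs_log_gaussianPDFReal_sub_le {L r μ₁ μ₂ x : ℝ} {v₁ v₂ : NNReal} (hL : 1 ≤ L) (hr : 1 ≤ r)
    (h₁ : v₁ ≠ 0) (h₂ : v₂ ≠ 0) (h₁₂ : √v₁ ≤ L * √v₂) (h₂₁ : √v₂ ≤ L * √v₁)
    (hμ : |μ₁ - μ₂| ≤ L * √v₁) (hx : |x - μ₁| ≤ r * √v₁) :
    |log (gaussianPDFReal μ₁ v₁ x) - log (gaussianPDFReal μ₂ v₂ x)| ≤ 4 * L ^ 4 * r ^ 2 := by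
  have hs₁ := sqrt_nonneg (v₁ : ℝ)
  have hnorm : |log √(2 * π * v₂) - log √(2 * π * v₁)| ≤ log L := by
    simp_rw [mul_comm (2 * π), sqrt_mul (NNReal.coe_nonneg _)]
    refine abs_log_sub_log_le (by positivity) (by positivity) ?_ ?_ <;>
      nlinarith [sqrt_nonneg (2 * π)]
  have hrL : r + L ≤ 2 * L * r := by nlinarith [mul_nonneg (sub_nonneg.2 hL) (sub_nonneg.2 hr)]
  have hx₂ : |x - μ₂| ≤ 2 * L ^ 2 * r * √v₂ := by
    calc |x - μ₂| ≤ |x - μ₁| + |μ₁ - μ₂| := abs_sub_le x μ₁ μ₂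
      _ ≤ (r + L) * √v₁ := by linarith
      _ ≤ 2 * L * r * √v₁ := mul_le_mul_of_nonneg_right hrL hs₁
      _ ≤ 2 * L * r * (L * √v₂) := mul_le_mul_of_nonneg_left h₁₂ (by positivity)
      _ = 2 * L ^ 2 * r * √v₂ := by ring
  have hq₁ := sq_div_two_mul_le_of_abs_le h₁ hx
  have hq₂ := sq_div_two_mul_le_of_abs_le h₂ hx₂
  have hL4 : 1 ≤ L ^ 4 := one_le_pow₀ hL
  have hr2 : 0 ≤ r ^ 2 := sq_nonneg r
  have hlogL : log L ≤ L ^ 4 * r ^ 2 :=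
    calc log L ≤ L := log_le_self (by positivity)
      _ ≤ L ^ 4 := le_self_pow₀ hL (by norm_num)
      _ ≤ L ^ 4 * r ^ 2 := le_mul_of_one_le_right (by positivity) (one_le_pow₀ hr)
  have hr2L : r ^ 2 ≤ L ^ 4 * r ^ 2 := le_mul_of_one_le_left hr2 hL4
  rw [log_gaussianPDFReal μ₁ h₁, log_gaussianPDFReal μ₂ h₂, abs_le]
  rw [abs_le] at hnorm
  have hn₁ : 0 ≤ (x - μ₁) ^ 2 / (2 * v₁) := by positivity
  have hn₂ : 0 ≤ (x - μ₂) ^ 2 / (2 * v₂) := by positivity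
  constructor <;> linarith

lemma le_div_and_div_le_one_div_of_abs_log_sub_le {a b ε : ℝ} (ha : 0 < a) (hb : 0 < b)
    (hε : 0 < ε) (h : |log a - log b| ≤ log ε⁻¹) : ε ≤ a / b ∧ a / b ≤ 1 / ε := by
  rw [← log_div ha.ne' hb.ne', abs_le, log_inv] at h
  constructor
  · exact (log_le_log_iff hε (div_pos ha hb)).1 (by linarith)
  · rw [← log_le_log_iff (div_pos ha hb) (by positivity), one_div, log_inv]
    linarith

lemma two_mul_exp_neg_half_le_exp_neg_quarter {s : ℝ} (hs : 4 ≤ s) :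
    2 * exp (-s / 2) ≤ exp (-s / 4) := by
  have h2 : 2 ≤ exp (s / 4) := by linarith [add_one_le_exp (s / 4)]
  calc 2 * exp (-s / 2) ≤ exp (s / 4) * exp (-s / 2) := by gcongr
    _ = exp (-s / 4) := by rw [← exp_add]; ring_nf

lemma one_sub_rpow_le_gaussianReal_real_abs_log_sub_le {L ε μ₁ μ₂ : ℝ} {v₁ v₂ : NNReal}
    (hL : 1 ≤ L) (h₁ : v₁ ≠ 0) (h₂ : v₂ ≠ 0) (h₁₂ : √v₁ ≤ L * √v₂) (h₂₁ : √v₂ ≤ L * √v₁)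
    (hμ : |μ₁ - μ₂| ≤ L * √v₁) (hε : 0 < ε) (hε₀ : ε ≤ exp (-(16 * L ^ 4))) :
    1 - ε ^ (1 / (16 * L ^ 4)) ≤ (gaussianReal μ₁ v₁).real
      {x | |log (gaussianPDFReal μ₁ v₁ x) - log (gaussianPDFReal μ₂ v₂ x)| ≤ log ε⁻¹} := by
  have hL4 : 0 < 4 * L ^ 4 := by positivity
  set s := log ε⁻¹ / (4 * L ^ 4)
  have hs : 4 ≤ s := by
    have := (log_le_iff_le_exp hε).2 hε₀
    rw [le_div_iff₀ hL4, log_inv]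
    linarith
  have hr : 1 ≤ √s := by rw [le_sqrt zero_le_one (by linarith)]; linarith
  have hball : ball μ₁ (√s * √v₁) ⊆
      {x | |log (gaussianPDFReal μ₁ v₁ x) - log (gaussianPDFReal μ₂ v₂ x)| ≤ log ε⁻¹} := by
    intro x hx
    rw [mem_ball, Real.dist_eq] at hx
    refine (abs_log_gaussianPDFReal_sub_le hL hr h₁ h₂ h₁₂ h₂₁ hμ hx.le).trans_eq ?_
    rw [sq_sqrt (by linarith), mul_div_cancel₀ _ hL4.ne']
  have htail := gaussianReal_real_compl_ball_le μ₁ v₁ (a := √s * √v₁) (by positivity)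
  rw [probReal_compl_eq_one_sub measurableSet_ball, neg_sq_mul_sqrt_div_two_mul _ h₁,
    sq_sqrt (by linarith)] at htail
  have hpow : ε ^ (1 / (16 * L ^ 4)) = exp (-s / 4) := by
    rw [rpow_def_of_pos hε]
    congr 1
    simp only [s, log_inv]
    field_simp
    ring
  linarith [two_mul_exp_neg_half_le_exp_neg_quarter hs,
    measureReal_mono hball (μ := gaussianReal μ₁ v₁)]

/-- If `A = N(μ₁, σ₁²)` and `B = N(μ₂, σ₂²)` are nondegenerate one-dimensional Gaussians
with `d_TV(A,B) ≤ 1 - λ`, then for all sufficiently small `ε > 0` and `D ∈ {A, B}`: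
`P_{x~D}[ε ≤ A(x)/B(x) ≤ 1/ε] ≥ 1 - ε^{c(λ)}` for some `c(λ) > 0` depending only on `λ`. -/
theorem stmt15 (lam : ℝ) (hlam : 0 < lam) :
    ∃ c : ℝ, 0 < c ∧ ∃ ε₀ : ℝ, 0 < ε₀ ∧
      ∀ (μ₁ μ₂ : ℝ) (v₁ v₂ : NNReal), v₁ ≠ 0 → v₂ ≠ 0 →
        tvDist (gaussianReal μ₁ v₁) (gaussianReal μ₂ v₂) ≤ 1 - lam →
        ∀ ε : ℝ, 0 < ε → ε ≤ ε₀ →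
        ∀ D : Measure ℝ, (D = gaussianReal μ₁ v₁ ∨ D = gaussianReal μ₂ v₂) →
          1 - Real.rpow ε c ≤
            (D {x | ε ≤ gaussianPDFReal μ₁ v₁ x / gaussianPDFReal μ₂ v₂ x ∧
                gaussianPDFReal μ₁ v₁ x / gaussianPDFReal μ₂ v₂ x ≤ 1 / ε}).toReal := by
  obtain ⟨L, hL, hclose⟩ := exists_sqrt_le_and_abs_sub_le_of_tvDist_le hlam
  refine ⟨1 / (16 * L ^ 4), by positivity, exp (-(16 * L ^ 4)), exp_pos _, ?_⟩
  intro μ₁ μ₂ v₁ v₂ h₁ h₂ hTV ε hε hε₀ D hD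
  obtain ⟨h₂₁, hμ₁₂⟩ := hclose μ₁ μ₂ v₁ v₂ h₁ h₂ hTV
  obtain ⟨h₁₂, hμ₂₁⟩ := hclose μ₂ μ₁ v₂ v₁ h₂ h₁ (tvDist_comm (gaussianReal μ₁ v₁) _ ▸ hTV)
  have hgood : {x | |log (gaussianPDFReal μ₁ v₁ x) - log (gaussianPDFReal μ₂ v₂ x)| ≤ log ε⁻¹} ⊆
      {x | ε ≤ gaussianPDFReal μ₁ v₁ x / gaussianPDFReal μ₂ v₂ x ∧
        gaussianPDFReal μ₁ v₁ x / gaussianPDFReal μ₂ v₂ x ≤ 1 / ε} := fun x hx ↦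
    le_div_and_div_le_one_div_of_abs_log_sub_le (gaussianPDFReal_pos _ _ x h₁)
      (gaussianPDFReal_pos _ _ x h₂) hε hx
  rw [rpow_eq_pow]
  rcases hD with rfl | rfl
  · exact (one_sub_rpow_le_gaussianReal_real_abs_log_sub_le hL h₁ h₂ h₁₂ h₂₁ hμ₁₂ hε hε₀).trans
      (measureReal_mono hgood)
  · have h := one_sub_rpow_le_gaussianReal_real_abs_log_sub_le hL h₂ h₁ h₂₁ h₁₂ hμ₂₁ hε hε₀
    simp only [abs_sub_comm] at h
    exact h.trans (measureReal_mono hgood)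
end

section
/- Let D = N(μ, I + Σ) be a Gaussian on R^d with I + Σ positive definite, and set a(X) = μ·X and b(X) = X^T Σ X as polynomials in formal variables X = (X_1,...,X_d). Define h_{m,D}(X) = E_{z~D}[\mathcal{H}_m(z_1 X_1 + ... + z_d X_d, X_1^2 + ... + X_d^2)], where \mathcal{H}_m is the homogenized Hermite polynomial. Then e^{a(X) y + (1/2) b(X) y^2} = \sum_{m=0}^{\infty} (1/m!) h_{m,D}(X) y^m as formal power series in y with coefficients in R[X_1,...,X_d]. -/
open MeasureTheory Matrix

/-- The homogenized Hermite polynomials `𝓗_m(x, y²)`: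
`𝓗_0 = 1`, `𝓗_1 = x`, `𝓗_m = x·𝓗_{m-1} - (m-1)·y²·𝓗_{m-2}`. -/
noncomputable def hermiteH : ℕ → ℝ → ℝ → ℝ
  | 0, _, _ => 1
  | 1, x, _ => x
  | (m + 2), x, y2 => x * hermiteH (m + 1) x y2 - ((m : ℝ) + 1) * y2 * hermiteH m x y2

/-- Density of the Gaussian `N(μ, S)` on `ℝ^d`. -/
noncomputable def gaussianPdf (d : ℕ) (μ : Fin d → ℝ) (S : Matrix (Fin d) (Fin d) ℝ)
    (x : Fin d → ℝ) : ℝ :=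
  (Real.sqrt ((2 * Real.pi) ^ d * S.det))⁻¹ *
    Real.exp (-((x - μ) ⬝ᵥ S⁻¹ *ᵥ (x - μ)) / 2)

/-- The Gaussian measure `N(μ, S)` on `ℝ^d`, defined by its density. -/
noncomputable def gaussianMeasure (d : ℕ) (μ : Fin d → ℝ)
    (S : Matrix (Fin d) (Fin d) ℝ) : Measure (Fin d → ℝ) :=
  volume.withDensity fun x => ENNReal.ofReal (gaussianPdf d μ S x)

/-- `h_{m,D}(X) = E_{z∼D}[𝓗_m(z·X, ‖X‖²)]` for `D = N(μ, S)`, evaluated at `X = x`. -/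
noncomputable def hermiteMoment (d : ℕ) (μ : Fin d → ℝ) (S : Matrix (Fin d) (Fin d) ℝ)
    (m : ℕ) (x : Fin d → ℝ) : ℝ :=
  ∫ z, hermiteH m (∑ i, z i * x i) (∑ i, x i ^ 2) ∂(gaussianMeasure d μ S)

/-!
The Taylor series at `0` of the entire function `e^{aw - cw²/2}`, whose `n`-th derivative is
`𝓗_n(a - cw, c) e^{aw - cw²/2}`, gives `e^{ay - cy²/2} = ∑ 𝓗_m(a, c) yᵐ / m!`. Put `a = z·x`,
`c = ‖x‖²` and integrate term by term against `D = N(μ, I + Σ)`: the right side becomes the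
series of the theorem, the left side `e^{-‖x‖²y²/2} E[e^{y z·x}]`, which the Gaussian moment
generating function evaluates to `e^{y μ·x + y² xᵀ(I + Σ)x/2 - ‖x‖²y²/2}`.
Term-by-term integration is dominated convergence: `|𝓗_m(a, c)| ≤ 𝓗_m(|a|, -|c|)`, and the
series of the latter sums to `e^{|ay| + |c|y²/2} ≤ e^{|c|y²/2} (e^{ay} + e^{-ay})`.
-/

open Polynomial
open scoped MatrixOrder

/-- The polynomial `p_n` with `(d/dw)ⁿ e^{aw - cw²/2} = p_n(w) e^{aw - cw²/2}`; in fact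
`p_n(w) = 𝓗_n(a - cw, c)`. -/
noncomputable def expQuadDerivPoly (a c : ℂ) : ℕ → ℂ[X]
  | 0 => 1
  | n + 1 => expQuadDerivPoly a c n * (C a - C c * X) + derivative (expQuadDerivPoly a c n)

lemma derivative_expQuadDerivPoly_succ (a c : ℂ) (n : ℕ) :
    derivative (expQuadDerivPoly a c (n + 1)) = C (-((n + 1) * c)) * expQuadDerivPoly a c n := by
  induction n with
  | zero => simp [expQuadDerivPoly]
  | succ n ih =>
    rw [expQuadDerivPoly, derivative_add, derivative_mul, ih, derivative_mul, derivative_C,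
      show derivative (C a - C c * X) = -C c by simp, expQuadDerivPoly]
    simp only [C_neg, C_mul, C_add, C_1, Nat.cast_add, Nat.cast_one]
    ring

lemma expQuadDerivPoly_eval_zero (a c : ℝ) (m : ℕ) :
    (expQuadDerivPoly a c m).eval 0 = hermiteH m a c := by
  induction m using Nat.strong_induction_on with
  | _ m ih =>
    match m with
    | 0 => simp [expQuadDerivPoly, hermiteH]
    | 1 => simp [expQuadDerivPoly, hermiteH]
    | m + 2 =>
      rw [expQuadDerivPoly, derivative_expQuadDerivPoly_succ, hermiteH]
      simp only [eval_add, eval_mul, eval_sub, eval_C, eval_X, ih (m + 1) (by omega),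
        ih m (by omega)]
      push_cast
      ring

lemma iteratedDeriv_cexp_quadratic (a c : ℂ) (n : ℕ) :
    iteratedDeriv n (fun w => Complex.exp (a * w - c * w ^ 2 / 2)) =
      fun w => (expQuadDerivPoly a c n).eval w * Complex.exp (a * w - c * w ^ 2 / 2) := by
  induction n with
  | zero => simp [expQuadDerivPoly]
  | succ n ih =>
    rw [iteratedDeriv_succ, ih]
    funext w
    have hexp : HasDerivAt (fun w => Complex.exp (a * w - c * w ^ 2 / 2))
        ((a - c * w) * Complex.exp (a * w - c * w ^ 2 / 2)) w := by
      have := (((hasDerivAt_id w).const_mul a).sub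
        (((hasDerivAt_pow 2 w).const_mul c).div_const 2)).cexp
      exact this.congr_deriv (by simp; ring)
    refine (((expQuadDerivPoly a c n).hasDerivAt w).mul hexp).deriv.trans ?_
    simp only [expQuadDerivPoly, eval_add, eval_mul, eval_sub, eval_C, eval_X]
    ring

theorem hasSum_hermiteH (a c y : ℝ) :
    HasSum (fun m : ℕ => 1 / (m.factorial : ℝ) * hermiteH m a c * y ^ m)
      (Real.exp (a * y - c * y ^ 2 / 2)) := by
  have hf : Differentiable ℂ fun w : ℂ => Complex.exp (a * w - c * w ^ 2 / 2) := by fun_prop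
  have H := Complex.hasSum_taylorSeries_of_entire hf 0 y
  simp only [iteratedDeriv_cexp_quadratic, expQuadDerivPoly_eval_zero, sub_zero, smul_eq_mul,
    mul_zero, zero_pow two_ne_zero, zero_div, Complex.exp_zero, mul_one] at H
  rw [← Complex.hasSum_ofReal]
  push_cast
  exact H.congr_fun fun m => by ring

lemma abs_hermiteH_le (a c : ℝ) (m : ℕ) : |hermiteH m a c| ≤ hermiteH m |a| (-|c|) := by
  induction m using Nat.strong_induction_on with
  | _ m ih =>
    match m with
    | 0 => simp [hermiteH]
    | 1 => simp [hermiteH]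
    | m + 2 =>
      have h1 := ih (m + 1) (by omega)
      have h0 := ih m (by omega)
      rw [hermiteH, hermiteH]
      calc |a * hermiteH (m + 1) a c - ((m : ℝ) + 1) * c * hermiteH m a c|
          ≤ |a| * |hermiteH (m + 1) a c| + ((m : ℝ) + 1) * |c| * |hermiteH m a c| := by
            refine (abs_sub _ _).trans_eq ?_
            rw [abs_mul, abs_mul, abs_mul, abs_of_nonneg (by positivity : (0 : ℝ) ≤ m + 1)]
        _ ≤ |a| * hermiteH (m + 1) |a| (-|c|) + ((m : ℝ) + 1) * |c| * hermiteH m |a| (-|c|) := by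
            gcongr
        _ = _ := by ring

lemma continuous_hermiteH (c : ℝ) (m : ℕ) : Continuous fun a => hermiteH m a c := by
  induction m using Nat.strong_induction_on with
  | _ m ih =>
    match m with
    | 0 => simpa [hermiteH] using continuous_const
    | 1 => simpa [hermiteH] using continuous_id'
    | m + 2 =>
      have h1 := ih (m + 1) (by omega)
      have h0 := ih m (by omega)
      simp only [hermiteH]
      fun_prop

theorem hasSum_integral_hermiteH {Ω : Type*} [MeasurableSpace Ω] {ν : Measure Ω} {f : Ω → ℝ}
    (hf : Measurable f) (c y : ℝ) (hpos : Integrable (fun z => Real.exp (y * f z)) ν)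
    (hneg : Integrable (fun z => Real.exp (-(y * f z))) ν) :
    HasSum (fun m : ℕ => ∫ z, 1 / (m.factorial : ℝ) * hermiteH m (f z) c * y ^ m ∂ν)
      (∫ z, Real.exp (f z * y - c * y ^ 2 / 2) ∂ν) := by
  set bound : ℕ → Ω → ℝ := fun m z => 1 / (m.factorial : ℝ) * hermiteH m |f z| (-|c|) * |y| ^ m
  have hbound : ∀ z, HasSum (bound · z) (Real.exp (|y * f z| + |c| * y ^ 2 / 2)) := fun z => by
    convert hasSum_hermiteH |f z| (-|c|) |y| using 2
    rw [abs_mul, sq_abs]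
    ring
  refine hasSum_integral_of_dominated_convergence bound (fun m => ?_) (fun m => ?_)
    (.of_forall fun z => (hbound z).summable) ?_ (.of_forall fun z => hasSum_hermiteH _ _ _)
  · exact (((continuous_hermiteH c m).measurable.comp hf).const_mul _ |>.mul_const _)
      |>.aestronglyMeasurable
  · refine .of_forall fun z => ?_
    rw [Real.norm_eq_abs, abs_mul, abs_mul, abs_pow, abs_of_nonneg (by positivity)]
    simp only [bound]
    gcongr
    exact abs_hermiteH_le _ _ _
  · simp only [(hbound _).tsum_eq]
    refine ((hpos.add hneg).const_mul (Real.exp (|c| * y ^ 2 / 2))).mono'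
      (by fun_prop) (.of_forall fun z => ?_)
    rw [Real.norm_of_nonneg (Real.exp_pos _).le, Real.exp_add, mul_comm]
    gcongr
    exact Real.exp_abs_le _

section StandardGaussian

variable {ι : Type*} [Fintype ι]

lemma exp_mul_sub_sq_div_two (b t : ℝ) :
    Real.exp (b * t - t ^ 2 / 2) = Real.exp (b ^ 2 / 2) * Real.exp (-2⁻¹ * (t - b) ^ 2) := by
  rw [← Real.exp_add]
  ring_nf

lemma integrable_exp_mul_sub_sq_div_two (b : ℝ) :
    Integrable fun t : ℝ => Real.exp (b * t - t ^ 2 / 2) := by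
  simp only [exp_mul_sub_sq_div_two b]
  exact ((integrable_exp_neg_mul_sq (by norm_num)).comp_sub_right b).const_mul _

lemma integral_exp_mul_sub_sq_div_two (b : ℝ) :
    ∫ t : ℝ, Real.exp (b * t - t ^ 2 / 2) = Real.sqrt (2 * Real.pi) * Real.exp (b ^ 2 / 2) := by
  simp only [exp_mul_sub_sq_div_two b]
  rw [integral_const_mul, integral_sub_right_eq_self (fun t => Real.exp (-2⁻¹ * t ^ 2)) b,
    integral_gaussian, div_inv_eq_mul, mul_comm Real.pi 2, mul_comm]

lemma exp_dotProduct_sub_dotProduct_div_two (c u : ι → ℝ) :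
    Real.exp (c ⬝ᵥ u - u ⬝ᵥ u / 2) = ∏ i, Real.exp (c i * u i - u i ^ 2 / 2) := by
  rw [← Real.exp_sum, Finset.sum_sub_distrib, ← Finset.sum_div]
  simp only [dotProduct, sq]

lemma integrable_exp_dotProduct_sub_dotProduct_div_two (c : ι → ℝ) :
    Integrable fun u : ι → ℝ => Real.exp (c ⬝ᵥ u - u ⬝ᵥ u / 2) := by
  simp only [exp_dotProduct_sub_dotProduct_div_two]
  exact Integrable.fintype_prod fun i => integrable_exp_mul_sub_sq_div_two (c i)

lemma integral_exp_dotProduct_sub_dotProduct_div_two (c : ι → ℝ) :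
    ∫ u : ι → ℝ, Real.exp (c ⬝ᵥ u - u ⬝ᵥ u / 2) =
      Real.sqrt (2 * Real.pi) ^ Fintype.card ι * Real.exp (c ⬝ᵥ c / 2) := by
  simp only [exp_dotProduct_sub_dotProduct_div_two]
  rw [integral_fintype_prod_volume_eq_prod (f := fun i t => Real.exp (c i * t - t ^ 2 / 2))]
  simp only [integral_exp_mul_sub_sq_div_two]
  rw [Finset.prod_mul_distrib, Finset.prod_const, ← Real.exp_sum, ← Finset.sum_div,
    Finset.card_univ]
  simp only [dotProduct, sq]

end StandardGaussian

section LinearChangeOfVariables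

variable {ι : Type*} [Fintype ι]

lemma measurable_mulVec_add (A : Matrix ι ι ℝ) (μ : ι → ℝ) :
    Measurable fun u => A *ᵥ u + μ :=
  ((continuous_const.matrix_mulVec continuous_id).add continuous_const).measurable

variable [DecidableEq ι]

lemma det_sqrt_eq_sqrt_det {S : Matrix ι ι ℝ} (hS : S.PosSemidef) :
    (CFC.sqrt S).det = Real.sqrt S.det := by
  rw [hS.det_sqrt, RCLike.sqrt_of_nonneg hS.det_nonneg]
  simp

lemma det_sqrt_pos {S : Matrix ι ι ℝ} (hS : S.PosDef) : 0 < (CFC.sqrt S).det := by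
  rw [det_sqrt_eq_sqrt_det hS.posSemidef]
  exact Real.sqrt_pos.mpr hS.det_pos

variable {A : Matrix ι ι ℝ}

lemma map_volume_mulVec_add (hA : A.det ≠ 0) (μ : ι → ℝ) :
    Measure.map (fun u => A *ᵥ u + μ) volume = ENNReal.ofReal |A.det|⁻¹ • volume := by
  have hlin : Continuous (Matrix.toLin' A) := (Matrix.toLin' A).continuous_of_finiteDimensional
  rw [show (fun u => A *ᵥ u + μ) = (· + μ) ∘ Matrix.toLin' A from rfl,
    ← Measure.map_map (measurable_add_const μ) hlin.measurable,
    Real.map_matrix_volume_pi_eq_smul_volume_pi hA, Measure.map_smul,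
    map_add_right_eq_self, abs_inv]

lemma integrable_comp_mulVec_add_iff (hA : A.det ≠ 0) (μ : ι → ℝ) {g : (ι → ℝ) → ℝ}
    (hg : Continuous g) : Integrable (fun u => g (A *ᵥ u + μ)) ↔ Integrable g := by
  rw [← Function.comp_def, ← integrable_map_measure hg.aestronglyMeasurable
    (measurable_mulVec_add A μ).aemeasurable, map_volume_mulVec_add hA,
    integrable_smul_measure (by simpa using hA) ENNReal.ofReal_ne_top]

lemma integral_comp_mulVec_add (hA : A.det ≠ 0) (μ : ι → ℝ) {g : (ι → ℝ) → ℝ}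
    (hg : Continuous g) : ∫ u, g (A *ᵥ u + μ) = |A.det|⁻¹ * ∫ z, g z := by
  rw [← integral_map (measurable_mulVec_add A μ).aemeasurable hg.aestronglyMeasurable,
    map_volume_mulVec_add hA, integral_smul_measure, ENNReal.toReal_ofReal (by positivity),
    smul_eq_mul]

end LinearChangeOfVariables

section GaussianMeasure

variable {d : ℕ} (μ : Fin d → ℝ) (S : Matrix (Fin d) (Fin d) ℝ)

lemma gaussianPdf_nonneg (x : Fin d → ℝ) : 0 ≤ gaussianPdf d μ S x := by
  unfold gaussianPdf
  positivity

lemma continuous_gaussianPdf : Continuous (gaussianPdf d μ S) := by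
  unfold gaussianPdf dotProduct mulVec dotProduct
  fun_prop

lemma continuous_exp_dotProduct_mul_gaussianPdf (w : Fin d → ℝ) :
    Continuous fun z => Real.exp (z ⬝ᵥ w) * gaussianPdf d μ S z := by
  have := continuous_gaussianPdf μ S
  unfold dotProduct
  fun_prop

variable {μ S}

lemma integrable_gaussianMeasure_iff {g : (Fin d → ℝ) → ℝ} :
    Integrable g (gaussianMeasure d μ S) ↔ Integrable fun z => g z * gaussianPdf d μ S z := by
  rw [gaussianMeasure, integrable_withDensity_iff
    (continuous_gaussianPdf μ S).measurable.ennreal_ofReal (.of_forall fun _ => by simp)]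
  simp only [ENNReal.toReal_ofReal (gaussianPdf_nonneg μ S _)]

lemma integral_gaussianMeasure (g : (Fin d → ℝ) → ℝ) :
    ∫ z, g z ∂gaussianMeasure d μ S = ∫ z, g z * gaussianPdf d μ S z := by
  rw [gaussianMeasure, integral_withDensity_eq_integral_toReal_smul
    (continuous_gaussianPdf μ S).measurable.ennreal_ofReal (.of_forall fun _ => by simp)]
  simp only [ENNReal.toReal_ofReal (gaussianPdf_nonneg μ S _), smul_eq_mul, mul_comm]

lemma exp_dotProduct_mul_gaussianPdf_sqrt_mulVec_add (hS : S.PosDef) (w u : Fin d → ℝ) :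
    Real.exp ((CFC.sqrt S *ᵥ u + μ) ⬝ᵥ w) * gaussianPdf d μ S (CFC.sqrt S *ᵥ u + μ) =
      Real.exp (μ ⬝ᵥ w) * (Real.sqrt (2 * Real.pi) ^ d * (CFC.sqrt S).det)⁻¹ *
        Real.exp ((CFC.sqrt S *ᵥ w) ⬝ᵥ u - u ⬝ᵥ u / 2) := by
  set A := CFC.sqrt S
  have hAt : Aᵀ = A := (CFC.sqrt_nonneg S).posSemidef.isHermitian
  have hSt : Sᵀ = S := hS.isHermitian
  have hAA : A * A = S := CFC.sqrt_mul_sqrt_self S hS.posSemidef.nonneg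
  have hdet : A.det = Real.sqrt S.det := det_sqrt_eq_sqrt_det hS.posSemidef
  have hASA : A * S⁻¹ * A = 1 := by
    have hunit : IsUnit A.det := (det_sqrt_pos hS).ne'.isUnit
    rw [← hAA, Matrix.mul_inv_rev, ← Matrix.mul_assoc, Matrix.mul_nonsing_inv _ hunit,
      Matrix.one_mul, Matrix.nonsing_inv_mul _ hunit]
  have hquad : (A *ᵥ u) ⬝ᵥ (S⁻¹ *ᵥ (A *ᵥ u)) = u ⬝ᵥ u := by
    rw [Matrix.mulVec_mulVec, Matrix.dotProduct_mulVec, ← Matrix.mulVec_transpose,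
      Matrix.transpose_mul, Matrix.transpose_nonsing_inv, hAt, hSt, Matrix.mulVec_mulVec, hASA,
      Matrix.one_mulVec]
  have hsym : (A *ᵥ u) ⬝ᵥ w = (A *ᵥ w) ⬝ᵥ u := by
    rw [dotProduct_comm, Matrix.dotProduct_mulVec, ← Matrix.mulVec_transpose, hAt,
      dotProduct_comm]
  have hnorm : Real.sqrt ((2 * Real.pi) ^ d * S.det) = Real.sqrt (2 * Real.pi) ^ d * A.det := by
    have hpow : Real.sqrt ((2 * Real.pi) ^ d) = Real.sqrt (2 * Real.pi) ^ d := by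
      rw [← Real.sqrt_sq (pow_nonneg (Real.sqrt_nonneg _) d), ← pow_mul, pow_mul',
        Real.sq_sqrt (by positivity)]
    rw [Real.sqrt_mul (by positivity), hpow, hdet]
  rw [gaussianPdf, add_sub_cancel_right, hquad, hnorm, add_dotProduct, hsym, Real.exp_add,
    sub_eq_add_neg, Real.exp_add, neg_div]
  ring


lemma integrable_exp_dotProduct_gaussianMeasure (hS : S.PosDef) (w : Fin d → ℝ) :
    Integrable (fun z => Real.exp (z ⬝ᵥ w)) (gaussianMeasure d μ S) := by
  rw [integrable_gaussianMeasure_iff, ← integrable_comp_mulVec_add_iff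
    (det_sqrt_pos hS).ne' μ (continuous_exp_dotProduct_mul_gaussianPdf μ S w)]
  simp only [exp_dotProduct_mul_gaussianPdf_sqrt_mulVec_add hS]
  exact (integrable_exp_dotProduct_sub_dotProduct_div_two _).const_mul _

lemma integral_exp_dotProduct_gaussianMeasure (hS : S.PosDef) (w : Fin d → ℝ) :
    ∫ z, Real.exp (z ⬝ᵥ w) ∂gaussianMeasure d μ S = Real.exp (μ ⬝ᵥ w + w ⬝ᵥ S *ᵥ w / 2) := by
  have hdet := det_sqrt_pos hS
  have hAt : (CFC.sqrt S)ᵀ = CFC.sqrt S := (CFC.sqrt_nonneg S).posSemidef.isHermitian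
  have hAw : (CFC.sqrt S *ᵥ w) ⬝ᵥ (CFC.sqrt S *ᵥ w) = w ⬝ᵥ S *ᵥ w := by
    rw [Matrix.dotProduct_mulVec, ← Matrix.mulVec_transpose, hAt, Matrix.mulVec_mulVec,
      CFC.sqrt_mul_sqrt_self S hS.posSemidef.nonneg, dotProduct_comm]
  have hchange := integral_comp_mulVec_add hdet.ne' μ
    (continuous_exp_dotProduct_mul_gaussianPdf μ S w)
  simp only [exp_dotProduct_mul_gaussianPdf_sqrt_mulVec_add hS, integral_const_mul,
    integral_exp_dotProduct_sub_dotProduct_div_two, Fintype.card_fin, hAw] at hchange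
  rw [eq_inv_mul_iff_mul_eq₀ (by positivity)] at hchange
  rw [integral_gaussianMeasure, ← hchange, abs_of_pos hdet, Real.exp_add]
  field_simp

end GaussianMeasure

/-- For `D = N(μ, I + Σ)` with `I + Σ` positive definite, `a(X) = μ·X`, `b(X) = XᵀΣX`:
`e^{a(X)y + (1/2)b(X)y²} = ∑_{m≥0} (1/m!) h_{m,D}(X) y^m` (as an identity of polynomials
in `X`, stated here at every real point `x` and every `y`). -/
theorem stmt16 (d : ℕ) (μ : Fin d → ℝ) (S : Matrix (Fin d) (Fin d) ℝ)
    (hpos : ((1 : Matrix (Fin d) (Fin d) ℝ) + S).PosDef)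
    (x : Fin d → ℝ) (y : ℝ) :
    HasSum (fun m : ℕ => (1 / (m.factorial : ℝ)) * hermiteMoment d μ (1 + S) m x * y ^ m)
      (Real.exp ((μ ⬝ᵥ x) * y + (x ⬝ᵥ S *ᵥ x) * y ^ 2 / 2)) := by
  have hmeas : Measurable fun z : Fin d → ℝ => z ⬝ᵥ x :=
    (continuous_id.dotProduct continuous_const).measurable
  have hint (t : ℝ) :
      Integrable (fun z => Real.exp (t * (z ⬝ᵥ x))) (gaussianMeasure d μ (1 + S)) := by
    simpa [dotProduct_smul] using integrable_exp_dotProduct_gaussianMeasure hpos (t • x)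
  have hexp (z : Fin d → ℝ) : Real.exp ((z ⬝ᵥ x) * y - (∑ i, x i ^ 2) * y ^ 2 / 2) =
      Real.exp (-((x ⬝ᵥ x) * y ^ 2 / 2)) * Real.exp (z ⬝ᵥ (y • x)) := by
    rw [← Real.exp_add, dotProduct_smul, smul_eq_mul]
    simp only [dotProduct, sq]
    ring_nf
  have H := hasSum_integral_hermiteH hmeas (∑ i, x i ^ 2) y (hint y) (by simpa using hint (-y))
  simp only [hexp, integral_const_mul, integral_exp_dotProduct_gaussianMeasure hpos] at H
  convert H using 1
  · funext m
    rw [hermiteMoment, ← integral_const_mul, ← integral_mul_const]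
    rfl
  · rw [← Real.exp_add]
    congr 1
    simp only [dotProduct_smul, smul_dotProduct, Matrix.mulVec_smul, Matrix.add_mulVec,
      Matrix.one_mulVec, dotProduct_add, smul_eq_mul]
    ring
end

section
/- Let P be a finite-dimensional real vector space of polynomials, and for each type t in a finite totally-ordered index set T let Q_t ≥ 0 be reals with \sum_{t∈T} Q_t = 1. Suppose there exist constants K ≥ 1 and a quantity R ≥ 0 such that for the first type, R ≥ Q_{t_1}, and for each subsequent type t_i, R ≥ Q_{t_i} - K\sqrt{Q_{t_1} + ... + Q_{t_{i-1}}}. Then R ≥ δ(K, |T|) for some explicit δ(K,n) > 0 depending only on K and n = |T| (for instance δ = (1/(2K+2))^{2^n} works). -/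
/-!
Argue by contradiction with `R < ε ^ 2 ^ n`, `ε = 1 / (2K + 2)`, on the partial sums
`S k = Q₀ + ⋯ + Q_{k-1}`, which satisfy `S (k + 1) ≤ S k + R + K √(S k)`. If `S k ≤ (ε x)²`
with `x ≤ 1` and `R < ε x`, this recursion gives `S (k + 1) < x`; running it backwards from
`x = 1` at `k = n` gives thresholds `(ε ^ (2 ^ j - 1))²` with `j = n - k` steps left, all
above `R`. Starting from `S 0 = 0` this forces `S n < 1`, against `∑ Q = 1`.
-/

open Finset

theorem sum_filter_val_lt_succ {M : Type*} [AddCommMonoid M] {n k : ℕ} (f : Fin n → M)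
    (hk : k < n) :
    ∑ j ∈ univ.filter (fun j : Fin n => (j : ℕ) < k + 1), f j =
      ∑ j ∈ univ.filter (fun j : Fin n => (j : ℕ) < k), f j + f ⟨k, hk⟩ := by
  have : univ.filter (fun j : Fin n => (j : ℕ) < k + 1) =
      insert ⟨k, hk⟩ (univ.filter (fun j : Fin n => (j : ℕ) < k)) := by
    ext j
    simp only [mem_insert, mem_filter, mem_univ, true_and, Fin.ext_iff]
    omega
  rw [this, sum_insert (by simp), add_comm]

theorem lt_of_le_add_add_mul_sqrt {K ε x s s' R : ℝ} (hK : 0 ≤ K) (hε : 0 ≤ ε)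
    (hεK : ε * (K + 2) ≤ 1) (hx : 0 ≤ x) (hx1 : x ≤ 1) (hs : s ≤ (ε * x) ^ 2)
    (hR : R < ε * x) (hs' : s' ≤ s + R + K * √s) : s' < x := by
  have hεx : ε * x ≤ 1 := by nlinarith
  have hsqrt : √s ≤ ε * x := (Real.sqrt_le_left (by positivity)).2 hs
  have hsq : (ε * x) ^ 2 ≤ ε * x := pow_le_of_le_one (by positivity) hεx two_ne_zero
  calc s' < (ε * x) ^ 2 + ε * x + K * (ε * x) := by
        nlinarith [mul_le_mul_of_nonneg_left hsqrt hK]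
    _ ≤ ε * x + ε * x + K * (ε * x) := by linarith
    _ = ε * (K + 2) * x := by ring
    _ ≤ x := mul_le_of_le_one_left hx hεK

theorem pow_two_pow_succ_sub_one (ε : ℝ) (j : ℕ) :
    ε ^ (2 ^ (j + 1) - 1) = ε * (ε ^ (2 ^ j - 1)) ^ 2 := by
  have : 2 ^ (j + 1) - 1 = 1 + (2 ^ j - 1) * 2 := by
    have := Nat.one_le_two_pow (n := j); rw [pow_succ]; omega
  rw [this, pow_add, pow_one, pow_mul]

theorem lt_one_of_le_add_add_mul_sqrt {K ε R : ℝ} {n : ℕ} {s : ℕ → ℝ} (hK : 0 ≤ K)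
    (hε : 0 < ε) (hεK : ε * (K + 2) ≤ 1) (hR : R < ε ^ (2 ^ n - 1)) (h0 : s 0 = 0)
    (hs : ∀ k < n, s (k + 1) ≤ s k + R + K * √(s k)) : s n < 1 := by
  have hε1 : ε ≤ 1 := by nlinarith
  suffices ∀ k ≤ n, s k < (ε ^ (2 ^ (n - k) - 1)) ^ 2 by simpa using this n le_rfl
  intro k
  induction k with
  | zero => intro; rw [h0]; positivity
  | succ k ih =>
    intro hk
    have hnk : n - k = n - (k + 1) + 1 := by omega
    refine lt_of_le_add_add_mul_sqrt hK hε.le hεK (by positivity)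
      (pow_le_one₀ (pow_nonneg hε.le _) (pow_le_one₀ hε.le hε1)) ?_ ?_ (hs k hk)
    · rw [← pow_two_pow_succ_sub_one, ← hnk]
      exact (ih (by omega)).le
    · rw [← pow_two_pow_succ_sub_one, ← hnk]
      exact hR.trans_le (pow_le_pow_of_le_one hε.le hε1 (by gcongr <;> omega))

theorem stmt19_general (n : ℕ) (Q : Fin n → ℝ) (K R : ℝ)
    (hQ1 : ∑ i, Q i = 1) (hK : 1 ≤ K)
    (h2 : ∀ i : Fin n,
      Q i - K * Real.sqrt (∑ j ∈ Finset.univ.filter (· < i), Q j) ≤ R) :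
    (1 / (2 * K + 2)) ^ (2 ^ n) ≤ R := by
  by_contra! hR
  set ε : ℝ := 1 / (2 * K + 2)
  have hε : 0 < ε := by positivity
  have hεK : ε * (K + 2) ≤ 1 := by
    rw [one_div_mul_eq_div, div_le_one (by positivity)]; linarith
  set s : ℕ → ℝ := fun k => ∑ j ∈ univ.filter (fun j : Fin n => (j : ℕ) < k), Q j
  have hsn : s n = 1 := by simpa [s] using hQ1
  have hR' : R < ε ^ (2 ^ n - 1) :=
    hR.trans_le (pow_le_pow_of_le_one hε.le (by nlinarith) (Nat.sub_le _ _))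
  refine (lt_one_of_le_add_add_mul_sqrt (by linarith) hε hεK hR' (by simp [s]) ?_).ne hsn
  intro k hk
  have hQk := h2 ⟨k, hk⟩
  simp only [Fin.lt_def] at hQk
  simp only [s, sum_filter_val_lt_succ Q hk]
  linarith

/-- Abstract iteration lemma: if `Q₁, …, Q_n ≥ 0` sum to `1`, `K ≥ 1`, `R ≥ 0`,
`R ≥ Q₁`, and `R ≥ Q_i - K·√(Q₁ + ⋯ + Q_{i-1})` for each `i`, then
`R ≥ δ(K, n)` with the explicit choice `δ = (1/(2K+2))^{2^n}`. -/
theorem stmt19 (n : ℕ) (hn : 0 < n) (Q : Fin n → ℝ) (K R : ℝ)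
    (hQ0 : ∀ i, 0 ≤ Q i) (hQ1 : ∑ i, Q i = 1) (hK : 1 ≤ K) (hR : 0 ≤ R)
    (h1 : Q ⟨0, hn⟩ ≤ R)
    (h2 : ∀ i : Fin n,
      Q i - K * Real.sqrt (∑ j ∈ Finset.univ.filter (· < i), Q j) ≤ R) :
    (1 / (2 * K + 2)) ^ (2 ^ n) ≤ R :=
  stmt19_general n Q K R hQ1 hK h2
end
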